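/- arXiv:1505.04042 — 2 statements merged into one kernel-verified Lean document; each statement's English description precedes it below -/
import Mathlib

section
/- Let E ⊂ ℝ^n be a nonempty closed set, ε > 0, and set ω(x) = dist(x,E)^{ε−n}. Then: (A) if the upper Assouad dimension of E satisfies dim_A(E) < ε ≤ n, then ω is an A_p weight in ℝ^n for all 1 < p < ∞; and (B) if ε > n and 1 < p < ∞ are such that dim_A(E) < n − (ε−n)/(p−1), then ω is an A_p weight in ℝ^n. -/
open MeasureTheory Metric Set Filter
open scoped ENNReal Topology

noncomputable section

/-- `n`-dimensional Euclidean space. -/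
abbrev En (n : ℕ) := EuclideanSpace ℝ (Fin n)

/-- A weight on `ℝ^n`: a locally integrable function that is positive almost everywhere. -/
def IsWeight {n : ℕ} (ω : En n → ℝ) : Prop :=
  LocallyIntegrable ω volume ∧ ∀ᵐ x ∂(volume : Measure (En n)), 0 < ω x

/-- Axis-parallel cubes in `ℝ^n` (with positive side length). -/
def IsCube {n : ℕ} (Q : Set (En n)) : Prop :=
  ∃ (c : En n) (h : ℝ), 0 < h ∧ Q = {y | ∀ i, c i ≤ y i ∧ y i ≤ c i + h}

/-- The Muckenhoupt `A_p` condition with constant `A`: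
`(⨍_Q ω)(⨍_Q ω^{-1/(p-1)})^{p-1} ≤ A` for every cube `Q`. -/
def ApBound {n : ℕ} (p : ℝ) (ω : En n → ℝ) (A : ℝ) : Prop :=
  ∀ Q : Set (En n), IsCube Q →
    (⨍ x in Q, ω x) * (⨍ x in Q, ω x ^ (-(1 / (p - 1)))) ^ (p - 1) ≤ A

/-- `ω` is an `A_p` weight. -/
def IsApWeight {n : ℕ} (p : ℝ) (ω : En n → ℝ) : Prop :=
  IsWeight ω ∧ ∃ A > 0, ApBound p ω A

/-- The covering number `N(A,r)`: the minimal number of open balls of radius `r`,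
centered at points of `A`, needed to cover `A` (as an extended nonnegative real,
`∞` if no finite cover exists). -/
def coveringNumber {n : ℕ} (A : Set (En n)) (r : ℝ) : ℝ≥0∞ :=
  sInf ((fun T : Finset (En n) => (T.card : ℝ≥0∞)) ''
    {T : Finset (En n) | ↑T ⊆ A ∧ A ⊆ ⋃ c ∈ T, ball c r})

/-- The (upper) Assouad dimension of `E ⊆ ℝ^n`. -/
def assouadDim {n : ℕ} (E : Set (En n)) : ℝ :=
  sInf {lam : ℝ | 0 ≤ lam ∧ ∃ C : ℝ, 0 < C ∧ ∀ x ∈ E, ∀ r R : ℝ, 0 < r → r < R →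
    ENNReal.ofReal R < EMetric.diam E →
    coveringNumber (E ∩ ball x R) r ≤ ENNReal.ofReal (C * (R / r) ^ lam)}


section S7Aux

lemma vol_ball {n : ℕ} (hn : 1 ≤ n) (c : En n) {ρ : ℝ} (hρ : 0 ≤ ρ) :
    volume (ball c ρ) = ENNReal.ofReal (ρ ^ n) * volume (ball (0 : En n) 1) := by
  haveI : Nontrivial (En n) := Module.nontrivial_of_finrank_pos (R := ℝ)
    (by rw [finrank_euclideanSpace_fin]; omega)
  simpa [finrank_euclideanSpace_fin] using Measure.addHaar_ball (volume : Measure (En n)) c hρ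

lemma packing {n : ℕ} (hn : 1 ≤ n) (z : En n) {r R : ℝ} (hr : 0 < r) (hrR : r ≤ R)
    {A : Set (En n)} (hA : A ⊆ ball z R) :
    ∃ T : Finset (En n), ↑T ⊆ A ∧ A ⊆ ⋃ c ∈ T, ball c r ∧
      (T.card : ℝ) ≤ 8 ^ n * (R / r) ^ n := by
  classical
  have hR : 0 < R := lt_of_lt_of_le hr hrR
  have htb : TotallyBounded A :=
    ((isCompact_closedBall z R).totallyBounded).subset (hA.trans ball_subset_closedBall)
  obtain ⟨t, htA, htfin, htcov⟩ := (totallyBounded_iff_subset.1 htb) _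
    (dist_mem_uniformity (by positivity : (0:ℝ) < r/2))
  set tF := htfin.toFinset with htF
  set P : Finset (En n) → Prop := fun u => ∀ a ∈ u, ∀ b ∈ u, a ≠ b → r/2 ≤ dist a b with hP
  have hSne : (tF.powerset.filter P).Nonempty :=
    ⟨∅, Finset.mem_filter.2 ⟨Finset.empty_mem_powerset _, by simp [hP]⟩⟩
  obtain ⟨u, huS, humax⟩ := Finset.exists_max_image (tF.powerset.filter P) Finset.card hSne
  have huP : P u := (Finset.mem_filter.1 huS).2
  have hut : u ⊆ tF := Finset.mem_powerset.1 (Finset.mem_filter.1 huS).1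
  have huA : ↑u ⊆ A := fun x hx => htA (htfin.mem_toFinset.1 (hut hx))
  have hnet : ∀ y ∈ tF, ∃ c ∈ u, dist y c < r/2 := by
    intro y hy
    by_contra hcon
    push_neg at hcon
    have hyu : y ∉ u := fun hy' => by
      have := hcon y hy'; rw [dist_self] at this; linarith
    have hins : insert y u ∈ tF.powerset.filter P := by
      refine Finset.mem_filter.2 ⟨Finset.mem_powerset.2 (Finset.insert_subset hy hut), ?_⟩
      intro a ha b hb hab
      rcases Finset.mem_insert.1 ha with rfl | ha' <;> rcases Finset.mem_insert.1 hb with rfl | hb'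
      · exact absurd rfl hab
      · exact hcon b hb'
      · rw [dist_comm]; exact hcon a ha'
      · exact huP a ha' b hb' hab
    have := humax _ hins
    rw [Finset.card_insert_of_notMem hyu] at this
    omega
  refine ⟨u, huA, ?_, ?_⟩
  · intro x hx
    rcases mem_iUnion₂.1 (htcov hx) with ⟨y, hy, hxy⟩
    obtain ⟨c, hcu, hyc⟩ := hnet y (htfin.mem_toFinset.2 hy)
    have hxy' : dist x y < r/2 := hxy
    refine mem_iUnion₂.2 ⟨c, hcu, mem_ball.2 ?_⟩
    calc dist x c ≤ dist x y + dist y c := dist_triangle _ _ _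
      _ < r := by linarith
  · -- cardinality bound via volume
    have hdisj : (↑u : Set (En n)).PairwiseDisjoint (fun c => ball c (r/4)) := by
      intro a ha b hb hab
      exact ball_disjoint_ball (by
        have := huP a ha b hb hab; linarith)
    have hsub : (⋃ c ∈ u, ball c (r/4)) ⊆ ball z (2*R) := by
      intro w hw
      rcases mem_iUnion₂.1 hw with ⟨c, hc, hwc⟩
      have hcz : dist c z < R := mem_ball.1 (hA (huA hc))
      have hwc' : dist w c < r/4 := mem_ball.1 hwc
      refine mem_ball.2 ?_
      calc dist w z ≤ dist w c + dist c z := dist_triangle _ _ _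
        _ < 2*R := by linarith
    have hvol : volume (⋃ c ∈ u, ball c (r/4)) = ∑ c ∈ u, volume (ball c (r/4)) :=
      measure_biUnion_finset hdisj (fun b _ => measurableSet_ball)
    set κ := volume (ball (0 : En n) 1) with hκ
    have hκ0 : κ ≠ 0 := (measure_ball_pos _ _ one_pos).ne'
    have hκt : κ ≠ ⊤ := measure_ball_lt_top.ne
    have hsum : (u.card : ℝ≥0∞) * (ENNReal.ofReal ((r/4)^n) * κ) ≤ ENNReal.ofReal ((2*R)^n) * κ := by
      calc (u.card : ℝ≥0∞) * (ENNReal.ofReal ((r/4)^n) * κ)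
          = ∑ c ∈ u, volume (ball c (r/4)) := by
            rw [Finset.sum_congr rfl (fun c _ => vol_ball hn c (by positivity))]
            rw [Finset.sum_const, nsmul_eq_mul]
        _ = volume (⋃ c ∈ u, ball c (r/4)) := hvol.symm
        _ ≤ volume (ball z (2*R)) := measure_mono hsub
        _ = ENNReal.ofReal ((2*R)^n) * κ := vol_ball hn z (by positivity)
    have hreal : (u.card : ℝ) * (r/4)^n ≤ (2*R)^n := by
      have h1 : (u.card : ℝ≥0∞) * ENNReal.ofReal ((r/4)^n) ≤ ENNReal.ofReal ((2*R)^n) := by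
        rw [← mul_assoc] at hsum
        exact (ENNReal.mul_le_mul_iff_left hκ0 hκt).1 hsum
      rw [← ENNReal.ofReal_natCast, ← ENNReal.ofReal_mul (by positivity)] at h1
      exact (ENNReal.ofReal_le_ofReal_iff (by positivity)).1 h1
    have hkey : (8:ℝ)^n * (R/r)^n * (r/4)^n = (2*R)^n := by
      rw [← mul_pow, ← mul_pow]
      congr 1
      field_simp
      ring
    have h4 : (0:ℝ) < (r/4)^n := by positivity
    rw [← hkey] at hreal
    exact le_of_mul_le_mul_right hreal h4


def ASet {n : ℕ} (E : Set (En n)) : Set ℝ :=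
  {lam : ℝ | 0 ≤ lam ∧ ∃ C : ℝ, 0 < C ∧ ∀ x ∈ E, ∀ r R : ℝ, 0 < r → r < R →
    ENNReal.ofReal R < EMetric.diam E →
    coveringNumber (E ∩ ball x R) r ≤ ENNReal.ofReal (C * (R / r) ^ lam)}

lemma assouadDim_eq {n : ℕ} (E : Set (En n)) : assouadDim E = sInf (ASet E) := rfl

lemma n_mem_ASet {n : ℕ} (hn : 1 ≤ n) (E : Set (En n)) : ((n : ℝ)) ∈ ASet E := by
  refine ⟨Nat.cast_nonneg n, 8 ^ n, by positivity, ?_⟩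
  intro x hx r R hr hrR hdiam
  obtain ⟨T, hT1, hT2, hT3⟩ := packing hn x hr hrR.le (inter_subset_right (s := E))
  refine le_trans (sInf_le ⟨T, ⟨hT1, hT2⟩, rfl⟩) ?_
  show (T.card : ℝ≥0∞) ≤ _
  rw [← ENNReal.ofReal_natCast]
  apply ENNReal.ofReal_le_ofReal
  rw [Real.rpow_natCast]
  exact hT3

lemma cover_extract {n : ℕ} {A : Set (En n)} {r b : ℝ} (hb : 0 ≤ b)
    (h : coveringNumber A r ≤ ENNReal.ofReal b) :
    ∃ T : Finset (En n), ↑T ⊆ A ∧ A ⊆ ⋃ c ∈ T, ball c r ∧ (T.card : ℝ) ≤ b + 1 := by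
  have h2 : coveringNumber A r < ENNReal.ofReal (b+1) := by
    refine lt_of_le_of_lt h ?_
    rw [ENNReal.ofReal_add hb zero_le_one, ENNReal.ofReal_one]
    exact ENNReal.lt_add_right ENNReal.ofReal_ne_top one_ne_zero
  obtain ⟨a, ⟨T, hT, rfl⟩, hlt⟩ := sInf_lt_iff.1 h2
  refine ⟨T, hT.1, hT.2, ?_⟩
  have hlt' : (T.card : ℝ≥0∞) < ENNReal.ofReal (b+1) := hlt
  rw [← ENNReal.ofReal_natCast] at hlt'
  exact le_of_lt ((ENNReal.ofReal_lt_ofReal_iff_of_nonneg (Nat.cast_nonneg _)).1 hlt')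

lemma exists_lam {n : ℕ} (hn : 1 ≤ n) (E : Set (En n)) {lt : ℝ} (hdim : assouadDim E < lt) :
    ∃ lam C : ℝ, 0 ≤ lam ∧ lam < lt ∧ 0 < C ∧ ∀ x ∈ E, ∀ r R : ℝ, 0 < r → r < R →
      ENNReal.ofReal R < EMetric.diam E →
      coveringNumber (E ∩ ball x R) r ≤ ENNReal.ofReal (C * (R / r) ^ lam) := by
  rw [assouadDim_eq] at hdim
  have hne : (ASet E).Nonempty := ⟨_, n_mem_ASet hn E⟩
  have hbdd : BddBelow (ASet E) := ⟨0, fun lam hlam => hlam.1⟩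
  obtain ⟨lam, hlamS, hlt⟩ := (csInf_lt_iff hbdd hne).1 hdim
  obtain ⟨hlam0, C, hC, hcov⟩ := hlamS
  exact ⟨lam, C, hlam0, hlt, hC, hcov⟩

lemma uniform_cover {n : ℕ} (hn : 1 ≤ n) {E : Set (En n)}
    {lam C : ℝ} (hlam : 0 ≤ lam) (hC : 0 < C)
    (hcov : ∀ x ∈ E, ∀ r R : ℝ, 0 < r → r < R → ENNReal.ofReal R < EMetric.diam E →
      coveringNumber (E ∩ ball x R) r ≤ ENNReal.ofReal (C * (R / r) ^ lam)) :
    ∃ C1 : ℝ, 0 < C1 ∧ ∀ z ∈ E, ∀ r R : ℝ, 0 < r → r < R →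
      ∃ T : Finset (En n), ↑T ⊆ E ∧ (E ∩ ball z R) ⊆ (⋃ c ∈ T, ball c r) ∧
        (T.card : ℝ) ≤ C1 * (R / r) ^ lam := by
  classical
  have h8 : (1:ℝ) ≤ 8^n*3^n := by
    have : (1:ℝ) ≤ 8^n := one_le_pow₀ (by norm_num)
    have : (1:ℝ) ≤ 3^n := one_le_pow₀ (by norm_num)
    nlinarith
  refine ⟨(8^n*3^n + 1) * (C+1), by positivity, ?_⟩
  intro z hz r R hr hrR
  have hRr1 : 1 ≤ R / r := le_of_lt ((one_lt_div hr).2 hrR)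
  have hrp1 : (1:ℝ) ≤ (R/r)^lam := Real.one_le_rpow hRr1 hlam
  have hrpnn : (0:ℝ) ≤ (R/r)^lam := by linarith
  rcases lt_or_ge (ENNReal.ofReal R) (EMetric.diam E) with hd | hd
  · obtain ⟨T, hT1, hT2, hT3⟩ := cover_extract (by positivity) (hcov z hz r R hr hrR hd)
    refine ⟨T, hT1.trans inter_subset_left, hT2, ?_⟩
    calc (T.card:ℝ) ≤ C * (R/r)^lam + 1 := hT3
      _ ≤ (C+1) * (R/r)^lam := by nlinarith
      _ ≤ (8^n*3^n+1)*(C+1)*(R/r)^lam := by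
          rw [mul_assoc]
          exact le_mul_of_one_le_left (by positivity) (by linarith)
  · have hdne : EMetric.diam E ≠ ⊤ := ne_top_of_le_ne_top ENNReal.ofReal_ne_top hd
    set Dr := (EMetric.diam E).toReal with hDrdef
    have hDr0 : 0 ≤ Dr := ENNReal.toReal_nonneg
    have hDrR : Dr ≤ R := by
      have h1 := ENNReal.toReal_mono ENNReal.ofReal_ne_top hd
      rwa [ENNReal.toReal_ofReal (le_of_lt (hr.trans hrR))] at h1
    have hBdd : Bornology.IsBounded E := Metric.isBounded_iff_ediam_ne_top.2 hdne
    have hdistD : ∀ y ∈ E, dist y z ≤ Dr := fun y hy => Metric.dist_le_diam_of_mem hBdd hy hz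
    rcases lt_or_ge r (Dr/2) with hcase | hcase
    · -- two-step cover
      have hDrpos : 0 < Dr := by linarith
      obtain ⟨T₀, hT₀E, hT₀cov, hT₀card⟩ := packing hn z
        (show (0:ℝ) < Dr/2 by linarith) (show Dr/2 ≤ Dr + Dr/2 by linarith)
        (fun y hy => mem_ball.2 (lt_of_le_of_lt (hdistD y hy) (by linarith)))
      have hT₀c3 : (T₀.card : ℝ) ≤ 8^n * 3^n := by
        refine hT₀card.trans ?_
        have h3 : ((Dr + Dr/2)/(Dr/2)) = 3 := by field_simp; ring
        rw [h3]
      have hstep : ∀ t ∈ T₀, ∃ Tt : Finset (En n), ↑Tt ⊆ E ∧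
          ((E ∩ ball t (Dr/2)) ⊆ ⋃ c ∈ Tt, ball c r) ∧ (Tt.card : ℝ) ≤ (C+1) * (R/r)^lam := by
        intro t ht
        have htE : t ∈ E := hT₀E ht
        have hdd : ENNReal.ofReal (Dr/2) < EMetric.diam E := by
          rw [← ENNReal.ofReal_toReal hdne]
          exact (ENNReal.ofReal_lt_ofReal_iff_of_nonneg (by linarith)).2 (by linarith)
        obtain ⟨Tt, h1, h2, h3⟩ := cover_extract (by positivity) (hcov t htE r (Dr/2) hr hcase hdd)
        refine ⟨Tt, h1.trans inter_subset_left, h2, ?_⟩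
        have hmono : (Dr/2/r)^lam ≤ (R/r)^lam :=
          Real.rpow_le_rpow (by positivity) (by gcongr <;> linarith) hlam
        calc (Tt.card:ℝ) ≤ C * (Dr/2/r)^lam + 1 := h3
          _ ≤ C * (R/r)^lam + (R/r)^lam := by nlinarith
          _ = (C+1)*(R/r)^lam := by ring
      choose f hf1 hf2 hf3 using hstep
      refine ⟨T₀.attach.biUnion (fun t => f t t.2), ?_, ?_, ?_⟩
      · intro x hx
        rcases Finset.mem_biUnion.1 hx with ⟨t, _, hxt⟩
        exact hf1 _ _ hxt
      · intro x hx
        have hxE : x ∈ E := hx.1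
        rcases mem_iUnion₂.1 (hT₀cov hxE) with ⟨t, ht, hxt⟩
        rcases mem_iUnion₂.1 (hf2 t ht ⟨hxE, hxt⟩) with ⟨c, hc, hxc⟩
        exact mem_iUnion₂.2 ⟨c, Finset.mem_biUnion.2 ⟨⟨t, ht⟩, Finset.mem_attach _ _, hc⟩, hxc⟩
      · calc ((T₀.attach.biUnion (fun t => f t t.2)).card : ℝ)
            ≤ ∑ t ∈ T₀.attach, ((f t t.2).card : ℝ) := by exact_mod_cast Finset.card_biUnion_le
          _ ≤ ∑ _t ∈ T₀.attach, (C+1)*(R/r)^lam := Finset.sum_le_sum (fun t _ => hf3 t t.2)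
          _ = T₀.card * ((C+1)*(R/r)^lam) := by
              rw [Finset.sum_const, Finset.card_attach, nsmul_eq_mul]
          _ ≤ (8^n*3^n) * ((C+1)*(R/r)^lam) := by
              have hX : (0:ℝ) ≤ (C+1)*(R/r)^lam := by positivity
              exact mul_le_mul_of_nonneg_right hT₀c3 hX
          _ ≤ (8^n*3^n+1)*(C+1)*(R/r)^lam := by
              have hX : (0:ℝ) ≤ (C+1)*(R/r)^lam := by positivity
              nlinarith [hX]
    · -- one-step packing
      obtain ⟨T, hTE, hTcov, hTcard⟩ := packing hn z hr
        (show r ≤ Dr + r by linarith)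
        (fun y hy => mem_ball.2 (lt_of_le_of_lt (hdistD y hy) (by linarith)))
      refine ⟨T, hTE, fun x hx => hTcov hx.1, ?_⟩
      have h3 : ((Dr + r)/r)^n ≤ 3^n := by
        apply pow_le_pow_left₀ (by positivity)
        rw [div_le_iff₀ hr]; linarith
      calc (T.card:ℝ) ≤ 8^n*((Dr+r)/r)^n := hTcard
        _ ≤ 8^n*3^n := by
            have h80 : (0:ℝ) ≤ 8^n := by positivity
            exact mul_le_mul_of_nonneg_left h3 h80
        _ ≤ (8^n*3^n+1)*(C+1)*(R/r)^lam := by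
            have hge : ((8:ℝ)^n*3^n) * 1 ≤ ((8^n*3^n+1)*(C+1)) * (R/r)^lam :=
              mul_le_mul (by nlinarith) hrp1 zero_le_one (by positivity)
            rw [mul_one] at hge
            rw [mul_assoc]
            rw [mul_assoc] at hge
            exact hge


lemma measurable_w {n : ℕ} {E : Set (En n)} (hEne : E.Nonempty) (hEcl : IsClosed E) (γ : ℝ) :
    Measurable fun x : En n => infDist x E ^ γ := by
  classical
  have heq : (fun x : En n => infDist x E ^ γ) = fun x =>
      if x ∈ E then (0:ℝ) ^ γ else Real.exp (Real.log (infDist x E) * γ) := by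
    funext x
    by_cases hx : x ∈ E
    · simp [hx, infDist_zero_of_mem hx]
    · have hpos : 0 < infDist x E := (hEcl.notMem_iff_infDist_pos hEne).1 hx
      simp [hx, Real.rpow_def_of_pos hpos]
  rw [heq]
  exact Measurable.ite hEcl.measurableSet measurable_const
    (Real.measurable_exp.comp ((Real.measurable_log.comp
      (continuous_infDist_pt E).measurable).mul_const γ))

lemma measure_near {n : ℕ} (hn : 1 ≤ n) {E : Set (En n)} (hEne : E.Nonempty) (hEcl : IsClosed E)
    {lam C1 : ℝ} (hlam0 : 0 ≤ lam) (hC1 : 0 < C1)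
    (hcov' : ∀ z ∈ E, ∀ r R : ℝ, 0 < r → r < R →
      ∃ T : Finset (En n), ↑T ⊆ E ∧ (E ∩ ball z R) ⊆ (⋃ c ∈ T, ball c r) ∧
        (T.card : ℝ) ≤ C1 * (R / r) ^ lam) :
    ∃ C2 : ℝ, 0 < C2 ∧ ∀ z ∈ E, ∀ h s : ℝ, 0 < h → 0 < s → s ≤ h →
      volume {x : En n | dist x z < h ∧ infDist x E ≤ s}
        ≤ ENNReal.ofReal (C2 * s ^ ((n:ℝ) - lam) * h ^ lam) := by
  set κ := (volume (ball (0:En n) 1)).toReal with hκdef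
  have hκ : 0 < κ := ENNReal.toReal_pos (measure_ball_pos _ _ one_pos).ne' measure_ball_lt_top.ne
  refine ⟨C1 * 3^lam * 2^n * κ, by positivity, ?_⟩
  intro z hz h s hh hs hsh
  obtain ⟨T, hTE, hTcov, hTcard⟩ := hcov' z hz s (3*h) hs (by linarith)
  have hVsub : {x : En n | dist x z < h ∧ infDist x E ≤ s} ⊆ ⋃ c ∈ T, ball c (2*s) := by
    rintro x ⟨hxz, hxd⟩
    obtain ⟨y, hyE, hyd⟩ := hEcl.exists_infDist_eq_dist hEne x
    have hdxy : dist x y ≤ s := by rw [← hyd]; exact hxd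
    have hyz : y ∈ E ∩ ball z (3*h) := ⟨hyE, mem_ball.2 (by
      have h1 := dist_triangle y x z
      rw [dist_comm y x] at h1
      linarith)⟩
    rcases mem_iUnion₂.1 (hTcov hyz) with ⟨c, hc, hyc⟩
    have hyc' : dist y c < s := mem_ball.1 hyc
    refine mem_iUnion₂.2 ⟨c, hc, mem_ball.2 ?_⟩
    calc dist x c ≤ dist x y + dist y c := dist_triangle _ _ _
      _ < 2*s := by linarith
  have hcard' : (T.card : ℝ≥0∞) ≤ ENNReal.ofReal (C1 * (3*h/s)^lam) := by
    rw [← ENNReal.ofReal_natCast]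
    exact ENNReal.ofReal_le_ofReal hTcard
  calc volume {x : En n | dist x z < h ∧ infDist x E ≤ s}
      ≤ volume (⋃ c ∈ T, ball c (2*s)) := measure_mono hVsub
    _ ≤ ∑ c ∈ T, volume (ball c (2*s)) := measure_biUnion_finset_le _ _
    _ = (T.card : ℝ≥0∞) * (ENNReal.ofReal ((2*s)^n) * volume (ball (0:En n) 1)) := by
        rw [Finset.sum_congr rfl (fun c _ => vol_ball hn c (by positivity)),
          Finset.sum_const, nsmul_eq_mul]
    _ ≤ ENNReal.ofReal (C1 * (3*h/s)^lam) * (ENNReal.ofReal ((2*s)^n) * volume (ball (0:En n) 1)) :=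
        mul_le_mul_left hcard' _
    _ = ENNReal.ofReal (C1 * (3*h/s)^lam * ((2*s)^n * κ)) := by
        rw [← ENNReal.ofReal_toReal (measure_ball_lt_top (x := (0:En n)) (r := 1)).ne, ← hκdef,
          ← ENNReal.ofReal_mul (by positivity), ← ENNReal.ofReal_mul (by positivity)]
    _ ≤ ENNReal.ofReal (C1 * 3^lam * 2^n * κ * s ^ ((n:ℝ) - lam) * h ^ lam) := by
        apply ENNReal.ofReal_le_ofReal
        apply le_of_eq
        rw [Real.div_rpow (by positivity) hs.le, Real.mul_rpow (by norm_num) hh.le,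
          mul_pow, ← Real.rpow_natCast s n, ← Real.rpow_natCast 2 n, Real.rpow_sub hs]
        have h3 : (0:ℝ) < s ^ lam := Real.rpow_pos_of_pos hs lam
        field_simp


lemma vol_E_zero {n : ℕ} {E : Set (En n)} (hEne : E.Nonempty)
    {lam C2 : ℝ} (hlamn : lam < n) (hC2 : 0 < C2)
    (hM : ∀ z ∈ E, ∀ h s : ℝ, 0 < h → 0 < s → s ≤ h →
      volume {x : En n | dist x z < h ∧ infDist x E ≤ s}
        ≤ ENNReal.ofReal (C2 * s ^ ((n:ℝ) - lam) * h ^ lam)) :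
    volume E = 0 := by
  obtain ⟨z, hz⟩ := hEne
  have hsub : E ⊆ ⋃ m : ℕ, E ∩ ball z (m+1) := by
    intro x hx
    obtain ⟨m, hm⟩ := exists_nat_gt (dist x z)
    exact mem_iUnion.2 ⟨m, hx, mem_ball.2 (by linarith)⟩
  refine measure_mono_null hsub (measure_iUnion_null fun m => ?_)
  set h : ℝ := m + 1 with hhdef
  have hh : 0 < h := by positivity
  set ρ : ℝ := (1/2:ℝ)^((n:ℝ)-lam) with hρdef
  have hρ0 : 0 ≤ ρ := Real.rpow_nonneg (by norm_num) _
  have hρ1 : ρ < 1 := Real.rpow_lt_one (by norm_num) (by norm_num) (by linarith)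
  have key : ∀ j : ℕ, volume (E ∩ ball z h)
      ≤ ENNReal.ofReal ((C2 * h^((n:ℝ)-lam) * h^lam) * ρ^(j+1)) := by
    intro j
    set s : ℝ := h * (1/2:ℝ)^(j+1) with hsdef
    have hs : 0 < s := by positivity
    have hsh : s ≤ h := by
      have h1 : ((1:ℝ)/2)^(j+1) ≤ 1 := pow_le_one₀ (by norm_num) (by norm_num)
      nlinarith
    refine le_trans (measure_mono ?_) ((hM z hz h s hh hs hsh).trans ?_)
    · rintro x ⟨hxE, hxb⟩
      exact ⟨mem_ball.1 hxb, by rw [infDist_zero_of_mem hxE]; exact hs.le⟩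
    · apply ENNReal.ofReal_le_ofReal
      have hss : s^((n:ℝ)-lam) = h^((n:ℝ)-lam) * ρ^(j+1) := by
        rw [hsdef, Real.mul_rpow hh.le (by positivity), hρdef]
        congr 1
        rw [← Real.rpow_natCast ((1:ℝ)/2) (j+1), ← Real.rpow_mul (by norm_num),
          mul_comm (((j+1:ℕ)):ℝ) ((n:ℝ)-lam), Real.rpow_mul (by norm_num), Real.rpow_natCast]
      rw [hss]
      exact le_of_eq (by ring)
  have htend : Tendsto (fun j : ℕ =>
      ENNReal.ofReal ((C2 * h^((n:ℝ)-lam) * h^lam) * ρ^(j+1))) atTop (𝓝 0) := by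
    have h1 : Tendsto (fun j : ℕ => ρ^(j+1)) atTop (𝓝 0) :=
      (tendsto_pow_atTop_nhds_zero_of_lt_one hρ0 hρ1).comp (tendsto_add_atTop_nat 1)
    have h2 := h1.const_mul (C2 * h^((n:ℝ)-lam) * h^lam)
    rw [mul_zero] at h2
    simpa using ENNReal.tendsto_ofReal h2
  exact le_antisymm (ge_of_tendsto' htend key) zero_le

lemma lint_neg_exp {n : ℕ} {E : Set (En n)} (hEne : E.Nonempty) (hEcl : IsClosed E)
    {lam C2 : ℝ} (hlam0 : 0 ≤ lam) (hC2 : 0 < C2)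
    (hM : ∀ z ∈ E, ∀ h s : ℝ, 0 < h → 0 < s → s ≤ h →
      volume {x : En n | dist x z < h ∧ infDist x E ≤ s}
        ≤ ENNReal.ofReal (C2 * s ^ ((n:ℝ) - lam) * h ^ lam))
    {γ : ℝ} (hγ : γ < 0) (hγ2 : lam - n < γ) :
    ∃ C3 : ℝ, 0 < C3 ∧ ∀ z ∈ E, ∀ h : ℝ, 0 < h →
      ∫⁻ x in ball z h, ENNReal.ofReal (infDist x E ^ γ)
        ≤ ENNReal.ofReal (C3 * h ^ ((n:ℝ) + γ)) := by
  set q : ℝ := 1/2 with hqdef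
  have hq0 : (0:ℝ) < q := by norm_num
  have hq1 : q < 1 := by norm_num
  set θ : ℝ := (n:ℝ) + γ - lam with hθdef
  have hθpos : 0 < θ := by rw [hθdef]; linarith
  set ρ : ℝ := q ^ θ with hρdef
  have hρ0 : 0 ≤ ρ := Real.rpow_nonneg hq0.le _
  have hρ1 : ρ < 1 := Real.rpow_lt_one hq0.le hq1 hθpos
  have hqγ : 0 < q ^ γ := Real.rpow_pos_of_pos hq0 _
  have h1ρ : (0:ℝ) < 1 - ρ := by linarith
  refine ⟨C2 * q^γ * (1-ρ)⁻¹, by positivity, ?_⟩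
  intro z hz h hh
  set A : ℕ → Set (En n) := fun k =>
    {x : En n | dist x z < h ∧ infDist x E ∈ Set.Ioc (h * q^(k+1)) (h * q^k)} with hAdef
  have hcover : ball z h ⊆ E ∪ ⋃ k, A k := by
    intro x hx
    by_cases hxE : x ∈ E
    · exact Or.inl hxE
    · right
      have hd0 : 0 < infDist x E := (hEcl.notMem_iff_infDist_pos hEne).1 hxE
      have hdh : infDist x E < h := lt_of_le_of_lt (infDist_le_dist_of_mem hz) (mem_ball.1 hx)
      have hex : ∃ k : ℕ, h * q ^ (k+1) < infDist x E := by
        obtain ⟨k, hk⟩ := exists_pow_lt_of_lt_one (show 0 < infDist x E / h by positivity) hq1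
        refine ⟨k, ?_⟩
        have h1 : q^(k+1) ≤ q^k := pow_le_pow_of_le_one hq0.le hq1.le (Nat.le_succ k)
        have h2 : h * q^k < infDist x E := by
          rw [lt_div_iff₀ hh] at hk
          linarith [hk]
        nlinarith
      have hk1 : h * q^(Nat.find hex + 1) < infDist x E := Nat.find_spec hex
      have hk2 : infDist x E ≤ h * q^(Nat.find hex) := by
        rcases Nat.eq_zero_or_pos (Nat.find hex) with h0 | h0
        · rw [h0]; simpa using hdh.le
        · have hmin := Nat.find_min hex (Nat.sub_lt h0 one_pos)
          push_neg at hmin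
          have : Nat.find hex - 1 + 1 = Nat.find hex := Nat.succ_pred_eq_of_pos h0
          rwa [this] at hmin
      exact mem_iUnion.2 ⟨Nat.find hex, mem_ball.1 hx, hk1, hk2⟩
  have e1 : ∀ (m : ℕ) (c : ℝ), ((q^m : ℝ))^c = (q^c)^m := by
    intro m c
    rw [← Real.rpow_natCast q m, ← Real.rpow_mul hq0.le, mul_comm, Real.rpow_mul hq0.le,
      Real.rpow_natCast]
  have hhh : h^γ * h^((n:ℝ)-lam) * h^lam = h^((n:ℝ)+γ) := by
    rw [← Real.rpow_add hh, ← Real.rpow_add hh]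
    ring_nf
  have hqq : ∀ k : ℕ, (q^γ)^k * (q^((n:ℝ)-lam))^k = ρ^k := by
    intro k
    rw [← mul_pow, ← Real.rpow_add hq0, hρdef, hθdef]
    ring_nf
  have hP : ∀ k : ℕ, (h*q^(k+1))^γ * (C2 * (h*q^k)^((n:ℝ)-lam) * h^lam)
      = (C2*q^γ*h^((n:ℝ)+γ)) * ρ^k := by
    intro k
    rw [Real.mul_rpow hh.le (by positivity), Real.mul_rpow hh.le (by positivity), e1, e1,
      ← hhh, ← hqq k, pow_succ]
    ring
  have hterm : ∀ k : ℕ, ∫⁻ x in A k, ENNReal.ofReal (infDist x E ^ γ)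
      ≤ ENNReal.ofReal ((C2*q^γ*h^((n:ℝ)+γ))) * ENNReal.ofReal ρ ^ k := by
    intro k
    have hqk1 : 0 < h * q^(k+1) := by positivity
    have hbd : ∀ x ∈ A k, ENNReal.ofReal (infDist x E ^ γ)
        ≤ ENNReal.ofReal ((h*q^(k+1))^γ) := by
      rintro x ⟨-, hx1, -⟩
      exact ENNReal.ofReal_le_ofReal (Real.rpow_le_rpow_of_nonpos hqk1 hx1.le hγ.le)
    calc ∫⁻ x in A k, ENNReal.ofReal (infDist x E ^ γ)
        ≤ ∫⁻ _x in A k, ENNReal.ofReal ((h*q^(k+1))^γ) := setLIntegral_mono measurable_const hbd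
      _ = ENNReal.ofReal ((h*q^(k+1))^γ) * volume (A k) := setLIntegral_const _ _
      _ ≤ ENNReal.ofReal ((h*q^(k+1))^γ) *
            ENNReal.ofReal (C2 * (h*q^k) ^ ((n:ℝ) - lam) * h ^ lam) := by
          refine mul_le_mul_right ?_ _
          refine le_trans (measure_mono ?_) (hM z hz h (h*q^k) hh (by positivity)
            (by nlinarith [pow_le_one₀ hq0.le hq1.le (n := k)]))
          rintro x ⟨hx0, hx1, hx2⟩
          exact ⟨hx0, hx2⟩
      _ = ENNReal.ofReal ((C2*q^γ*h^((n:ℝ)+γ)) * ρ^k) := by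
          rw [← ENNReal.ofReal_mul (by positivity), hP k]
      _ = ENNReal.ofReal ((C2*q^γ*h^((n:ℝ)+γ))) * ENNReal.ofReal ρ ^ k := by
          rw [ENNReal.ofReal_mul (by positivity), ENNReal.ofReal_pow hρ0]
  calc ∫⁻ x in ball z h, ENNReal.ofReal (infDist x E ^ γ)
      ≤ ∫⁻ x in E ∪ ⋃ k, A k, ENNReal.ofReal (infDist x E ^ γ) := lintegral_mono_set hcover
    _ ≤ (∫⁻ x in E, ENNReal.ofReal (infDist x E ^ γ))
        + ∫⁻ x in ⋃ k, A k, ENNReal.ofReal (infDist x E ^ γ) := lintegral_union_le _ _ _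
    _ ≤ 0 + ∑' k, ∫⁻ x in A k, ENNReal.ofReal (infDist x E ^ γ) := by
        refine add_le_add ?_ (lintegral_iUnion_le _ _)
        have : ∀ x ∈ E, ENNReal.ofReal (infDist x E ^ γ) ≤ (0:ℝ≥0∞) := by
          intro x hx
          simp [infDist_zero_of_mem hx, Real.zero_rpow hγ.ne]
        refine le_trans (setLIntegral_mono measurable_const this) ?_
        simp
    _ ≤ 0 + ∑' k, ENNReal.ofReal ((C2*q^γ*h^((n:ℝ)+γ))) * ENNReal.ofReal ρ ^ k :=
        add_le_add le_rfl (ENNReal.tsum_le_tsum hterm)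
    _ = ENNReal.ofReal ((C2*q^γ*h^((n:ℝ)+γ))) * (1 - ENNReal.ofReal ρ)⁻¹ := by
        rw [zero_add, ENNReal.tsum_mul_left, ENNReal.tsum_geometric]
    _ = ENNReal.ofReal (C2 * q^γ * (1-ρ)⁻¹ * h ^ ((n:ℝ) + γ)) := by
        rw [show (1:ℝ≥0∞) - ENNReal.ofReal ρ = ENNReal.ofReal (1-ρ) by
            rw [ENNReal.ofReal_sub 1 hρ0, ENNReal.ofReal_one],
          ← ENNReal.ofReal_inv_of_pos (by linarith), ← ENNReal.ofReal_mul (by positivity)]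
        congr 1
        ring



lemma cube_volume {n : ℕ} (c : En n) {h : ℝ} (hh : 0 < h) :
    volume {y : En n | ∀ i, c i ≤ y i ∧ y i ≤ c i + h} = ENNReal.ofReal (h ^ n) := by
  have hQ : {y : En n | ∀ i, c i ≤ y i ∧ y i ≤ c i + h}
      = ⇑(MeasurableEquiv.toLp 2 (Fin n → ℝ)).symm ⁻¹' (Set.univ.pi fun i => Icc (c i) (c i + h)) := by
    ext y
    simp [MeasurableEquiv.coe_toLp_symm, Set.mem_pi, Icc, and_comm]
  rw [hQ, (EuclideanSpace.volume_preserving_symm_measurableEquiv_toLp (Fin n)).measure_preimage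
    ((MeasurableSet.univ_pi fun i => measurableSet_Icc).nullMeasurableSet)]
  rw [volume_pi_pi]
  simp [Real.volume_Icc, ENNReal.ofReal_pow hh.le]

lemma cube_measurable {n : ℕ} (c : En n) (h : ℝ) :
    MeasurableSet {y : En n | ∀ i, c i ≤ y i ∧ y i ≤ c i + h} := by
  have hQ : {y : En n | ∀ i, c i ≤ y i ∧ y i ≤ c i + h}
      = ⇑(MeasurableEquiv.toLp 2 (Fin n → ℝ)).symm ⁻¹' (Set.univ.pi fun i => Icc (c i) (c i + h)) := by
    ext y
    simp [MeasurableEquiv.coe_toLp_symm, Set.mem_pi, Icc, and_comm]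
  rw [hQ]
  exact (MeasurableEquiv.toLp 2 (Fin n → ℝ)).symm.measurable
    (MeasurableSet.univ_pi fun i => measurableSet_Icc)

lemma cube_dist {n : ℕ} (c y : En n) {h : ℝ} (hh : 0 < h) (hy : ∀ i, c i ≤ y i ∧ y i ≤ c i + h) :
    dist y c ≤ n * h := by
  rw [EuclideanSpace.dist_eq]
  have h1 : ∀ i : Fin n, dist (y i) (c i) ^ 2 ≤ h ^ 2 := by
    intro i
    have := (hy i).1; have := (hy i).2
    rw [Real.dist_eq, sq_abs]
    nlinarith
  have h2 : (∑ i : Fin n, dist (y i) (c i) ^ 2) ≤ n * h ^ 2 := by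
    calc (∑ i : Fin n, dist (y i) (c i) ^ 2) ≤ ∑ _i : Fin n, h ^ 2 :=
          Finset.sum_le_sum fun i _ => h1 i
      _ = n * h ^ 2 := by simp [Finset.sum_const, nsmul_eq_mul]
  calc Real.sqrt (∑ i : Fin n, dist (y i) (c i) ^ 2) ≤ Real.sqrt ((n * h) ^ 2) := by
        apply Real.sqrt_le_sqrt
        have h4 : (n:ℝ) ≤ (n:ℝ)^2 := by exact_mod_cast Nat.le_self_pow two_ne_zero n
        nlinarith [sq_nonneg h]
    _ = n * h := Real.sqrt_sq (by positivity)


lemma avg_bound {n : ℕ} (hn : 1 ≤ n) {E : Set (En n)} (hEne : E.Nonempty) (hEcl : IsClosed E)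
    {γ : ℝ}
    (hI : γ < 0 → ∃ C3 : ℝ, 0 < C3 ∧ ∀ z ∈ E, ∀ h : ℝ, 0 < h →
      ∫⁻ x in ball z h, ENNReal.ofReal (infDist x E ^ γ)
        ≤ ENNReal.ofReal (C3 * h ^ ((n:ℝ) + γ))) :
    ∃ C4 : ℝ, 0 < C4 ∧ ∀ (c : En n) (h : ℝ), 0 < h →
      IntegrableOn (fun x => infDist x E ^ γ) {y : En n | ∀ i, c i ≤ y i ∧ y i ≤ c i + h} volume ∧
      0 ≤ (⨍ x in {y : En n | ∀ i, c i ≤ y i ∧ y i ≤ c i + h}, infDist x E ^ γ) ∧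
      (⨍ x in {y : En n | ∀ i, c i ≤ y i ∧ y i ≤ c i + h}, infDist x E ^ γ)
        ≤ C4 * (infDist c E + n*h) ^ γ := by
  have hnR : (1:ℝ) ≤ (n:ℝ) := by exact_mod_cast hn
  -- generic facts about cubes
  have gen : ∀ (c : En n) (h : ℝ), 0 < h → ∀ M : ℝ,
      (∀ x ∈ {y : En n | ∀ i, c i ≤ y i ∧ y i ≤ c i + h}, infDist x E ^ γ ≤ M) →
      IntegrableOn (fun x => infDist x E ^ γ) {y : En n | ∀ i, c i ≤ y i ∧ y i ≤ c i + h} volume ∧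
      (⨍ x in {y : En n | ∀ i, c i ≤ y i ∧ y i ≤ c i + h}, infDist x E ^ γ) ≤ M := by
    intro c h hh M hbd
    set Q := {y : En n | ∀ i, c i ≤ y i ∧ y i ≤ c i + h} with hQdef
    have hvol := cube_volume c hh
    have hvolne : volume Q ≠ ⊤ := by rw [hvol]; exact ENNReal.ofReal_ne_top
    have hvoltR : (volume Q).toReal = h^n := by rw [hvol, ENNReal.toReal_ofReal (by positivity)]
    have hvolpos : 0 < (volume Q).toReal := by rw [hvoltR]; positivity
    have hmeas := (measurable_w hEne hEcl γ).aestronglyMeasurable (μ := (volume : Measure (En n)))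
    have hint : IntegrableOn (fun x => infDist x E ^ γ) Q volume := by
      refine Measure.integrableOn_of_bounded hvolne hmeas (M := M) ?_
      filter_upwards [ae_restrict_mem (cube_measurable c h)] with x hx
      rw [Real.norm_eq_abs, abs_of_nonneg (Real.rpow_nonneg infDist_nonneg _)]
      exact hbd x hx
    refine ⟨hint, ?_⟩
    rw [setAverage_eq, smul_eq_mul]
    have hi2 : ∫ x in Q, infDist x E ^ γ ≤ (volume Q).toReal * M := by
      have := setIntegral_mono_on hint (integrableOn_const hvolne)
        (cube_measurable c h) hbd
      rwa [setIntegral_const, smul_eq_mul] at this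
    calc (volume Q).toReal⁻¹ * ∫ x in Q, infDist x E ^ γ
        ≤ (volume Q).toReal⁻¹ * ((volume Q).toReal * M) := by
          apply mul_le_mul_of_nonneg_left hi2 (by positivity)
      _ = M := by field_simp
  have gennn : ∀ (c : En n) (h : ℝ),
      0 ≤ (⨍ x in {y : En n | ∀ i, c i ≤ y i ∧ y i ≤ c i + h}, infDist x E ^ γ) := by
    intro c h
    rw [setAverage_eq, smul_eq_mul]
    apply mul_nonneg (by positivity)
    exact setIntegral_nonneg (cube_measurable c h)
      (fun x _ => Real.rpow_nonneg infDist_nonneg _)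
  rcases le_or_gt 0 γ with hγ | hγ
  · -- nonnegative exponent : C4 = 1
    refine ⟨1, one_pos, ?_⟩
    intro c h hh
    have ht0 : 0 ≤ infDist c E + n*h := add_nonneg infDist_nonneg (by positivity)
    have hup : ∀ x ∈ {y : En n | ∀ i, c i ≤ y i ∧ y i ≤ c i + h},
        infDist x E ^ γ ≤ (infDist c E + n*h) ^ γ := by
      intro x hx
      apply Real.rpow_le_rpow infDist_nonneg ?_ hγ
      calc infDist x E ≤ infDist c E + dist x c := infDist_le_infDist_add_dist
        _ ≤ infDist c E + n*h := by linarith [cube_dist c x hh hx]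
    obtain ⟨hint, havg⟩ := gen c h hh _ hup
    exact ⟨hint, gennn c h, by rw [one_mul]; exact havg⟩
  · -- negative exponent
    obtain ⟨C3, hC3, hIb⟩ := hI hγ
    have h3nγ : (0:ℝ) < ((3*n:ℝ)) ^ (-γ) := Real.rpow_pos_of_pos (by positivity) _
    have h3γ : (0:ℝ) < ((3:ℝ)) ^ (-γ) := Real.rpow_pos_of_pos (by norm_num) _
    set K : ℝ := C3 * (4*n) ^ ((n:ℝ)+γ) * (3*n) ^ (-γ) + 3 ^ (-γ) with hKdef
    have hKpos : 0 < K := by positivity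
    refine ⟨K, hKpos, ?_⟩
    intro c h hh
    set d := infDist c E with hddef
    have hd0 : 0 ≤ d := infDist_nonneg
    set t := d + n*h with htdef
    have ht : 0 < t := by nlinarith
    have htγ : 0 ≤ t ^ γ := Real.rpow_nonneg ht.le _
    rcases le_or_gt (2*n*h) d with hfar | hnear
    · -- far case
      have hlow : ∀ x ∈ {y : En n | ∀ i, c i ≤ y i ∧ y i ≤ c i + h}, t/3 ≤ infDist x E := by
        intro x hx
        have h1 : d ≤ infDist x E + dist c x := infDist_le_infDist_add_dist
        have h2 : dist x c ≤ n*h := cube_dist c x hh hx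
        rw [dist_comm] at h1
        have : (n:ℝ)*h > 0 := by positivity
        nlinarith
      have hup : ∀ x ∈ {y : En n | ∀ i, c i ≤ y i ∧ y i ≤ c i + h},
          infDist x E ^ γ ≤ (t/3) ^ γ := fun x hx =>
        Real.rpow_le_rpow_of_nonpos (by positivity) (hlow x hx) hγ.le
      obtain ⟨hint, havg⟩ := gen c h hh _ hup
      refine ⟨hint, gennn c h, havg.trans ?_⟩
      have heq : (t/3) ^ γ = 3 ^ (-γ) * t ^ γ := by
        rw [Real.div_rpow ht.le (by norm_num), Real.rpow_neg (by norm_num)]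
        field_simp
      rw [heq]
      have h0 : 0 ≤ C3 * (4*n) ^ ((n:ℝ)+γ) * (3*n) ^ (-γ) := by positivity
      nlinarith
    · -- near case
      set Q := {y : En n | ∀ i, c i ≤ y i ∧ y i ≤ c i + h} with hQdef
      obtain ⟨z, hzE, hzd⟩ := hEcl.exists_infDist_eq_dist hEne c
      have hQball : Q ⊆ ball z (4*n*h) := by
        intro x hx
        have h1 : dist x c ≤ n*h := cube_dist c x hh hx
        have h2 : dist c z = d := hzd.symm ▸ rfl
        refine mem_ball.2 ?_
        calc dist x z ≤ dist x c + dist c z := dist_triangle _ _ _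
          _ = dist x c + d := by rw [← hzd]
          _ < n*h + 2*n*h := by nlinarith
          _ ≤ 4*n*h := by nlinarith
      have h4nh : (0:ℝ) < 4*n*h := by positivity
      have hlint : ∫⁻ x in Q, ENNReal.ofReal (infDist x E ^ γ)
          ≤ ENNReal.ofReal (C3 * (4*n*h) ^ ((n:ℝ)+γ)) :=
        le_trans (lintegral_mono_set hQball) (by
          have := hIb z hzE (4*n*h) h4nh
          convert this using 3 <;> ring_nf)
      have hvol := cube_volume c hh
      have hvolne : volume Q ≠ ⊤ := by rw [hvol]; exact ENNReal.ofReal_ne_top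
      have hvoltR : (volume Q).toReal = h^n := by rw [hvol, ENNReal.toReal_ofReal (by positivity)]
      have hmeas := (measurable_w hEne hEcl γ).aestronglyMeasurable (μ := volume.restrict Q)
      have hnn : (fun _ : En n => (0:ℝ)) ≤ᵐ[volume.restrict Q] fun x => infDist x E ^ γ :=
        Filter.Eventually.of_forall (fun x => Real.rpow_nonneg infDist_nonneg _)
      have hint : IntegrableOn (fun x => infDist x E ^ γ) Q volume := by
        constructor
        · exact hmeas
        · rw [hasFiniteIntegral_iff_norm]
          have hcongr : ∫⁻ x in Q, ENNReal.ofReal ‖infDist x E ^ γ‖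
              = ∫⁻ x in Q, ENNReal.ofReal (infDist x E ^ γ) := by
            apply lintegral_congr
            intro x
            rw [Real.norm_eq_abs, abs_of_nonneg (Real.rpow_nonneg infDist_nonneg _)]
          rw [hcongr]
          exact lt_of_le_of_lt hlint ENNReal.ofReal_lt_top
      have hIeq : ∫ x in Q, infDist x E ^ γ
          = (∫⁻ x in Q, ENNReal.ofReal (infDist x E ^ γ)).toReal :=
        integral_eq_lintegral_of_nonneg_ae hnn hmeas
      have hIle : ∫ x in Q, infDist x E ^ γ ≤ C3 * (4*n*h) ^ ((n:ℝ)+γ) := by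
        rw [hIeq]
        calc (∫⁻ x in Q, ENNReal.ofReal (infDist x E ^ γ)).toReal
            ≤ (ENNReal.ofReal (C3 * (4*n*h) ^ ((n:ℝ)+γ))).toReal :=
              ENNReal.toReal_mono ENNReal.ofReal_ne_top hlint
          _ = C3 * (4*n*h) ^ ((n:ℝ)+γ) := ENNReal.toReal_ofReal (by positivity)
      refine ⟨hint, gennn c h, ?_⟩
      rw [setAverage_eq, smul_eq_mul, measureReal_def, hvoltR]
      -- (h^n)⁻¹ * ∫ ≤ K * t^γ
      have hhn : (0:ℝ) < h^n := by positivity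
      have step1 : (h^n)⁻¹ * ∫ x in Q, infDist x E ^ γ
          ≤ (h^n)⁻¹ * (C3 * (4*n*h) ^ ((n:ℝ)+γ)) := by
        apply mul_le_mul_of_nonneg_left hIle (by positivity)
      refine step1.trans ?_
      -- clean real computation
      have hsplit : (4*n*h : ℝ) ^ ((n:ℝ)+γ) = (4*n:ℝ)^((n:ℝ)+γ) * h^((n:ℝ)+γ) := by
        rw [show (4*(n:ℝ)*h) = (4*n)*h by ring, Real.mul_rpow (by positivity) hh.le]
      have hhsum : h^((n:ℝ)+γ) = h^n * h^γ := by
        rw [Real.rpow_add hh, Real.rpow_natCast]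
      have hstep2 : (h^n)⁻¹ * (C3 * (4*n*h) ^ ((n:ℝ)+γ))
          = C3 * (4*n:ℝ)^((n:ℝ)+γ) * h^γ := by
        rw [hsplit, hhsum]
        field_simp
      rw [hstep2]
      -- h^γ ≤ (3n)^{-γ} * t^γ
      have htle : t ≤ 3*n*h := by nlinarith
      have hmono : (3*n*h : ℝ)^γ ≤ t^γ := Real.rpow_le_rpow_of_nonpos ht htle hγ.le
      have hsplit2 : (3*n*h : ℝ)^γ = (3*n:ℝ)^γ * h^γ := by
        rw [show (3*(n:ℝ)*h) = (3*n)*h by ring, Real.mul_rpow (by positivity) hh.le]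
      have h3n : (0:ℝ) < (3*n:ℝ)^γ := Real.rpow_pos_of_pos (by positivity) _
      have hhγle : h^γ ≤ (3*n:ℝ)^(-γ) * t^γ := by
        rw [Real.rpow_neg (by positivity)]
        calc h^γ = ((3*n:ℝ)^γ)⁻¹ * ((3*n:ℝ)^γ * h^γ) := by field_simp
          _ ≤ ((3*n:ℝ)^γ)⁻¹ * t^γ := by
              apply mul_le_mul_of_nonneg_left ?_ (by positivity)
              rw [← hsplit2]; exact hmono
      have hC34 : (0:ℝ) ≤ C3 * (4*n:ℝ)^((n:ℝ)+γ) := by positivity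
      calc C3 * (4*n:ℝ)^((n:ℝ)+γ) * h^γ
          ≤ C3 * (4*n:ℝ)^((n:ℝ)+γ) * ((3*n:ℝ)^(-γ) * t^γ) := by
            apply mul_le_mul_of_nonneg_left hhγle hC34
        _ = (C3 * (4*n:ℝ)^((n:ℝ)+γ) * (3*n:ℝ)^(-γ)) * t^γ := by ring
        _ ≤ K * t^γ := mul_le_mul_of_nonneg_right (by rw [hKdef]; linarith) htγ


lemma coord_dist_le {n : ℕ} (x y : En n) (i : Fin n) : dist (x i) (y i) ≤ dist x y := by
  rw [EuclideanSpace.dist_eq,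
    show dist (x i) (y i) = Real.sqrt (dist (x i) (y i) ^2) from (Real.sqrt_sq dist_nonneg).symm]
  apply Real.sqrt_le_sqrt
  exact Finset.single_le_sum (f := fun j => dist (x j) (y j) ^ 2)
    (fun j _ => sq_nonneg _) (Finset.mem_univ i)

lemma core {n : ℕ} (hn : 1 ≤ n) {E : Set (En n)} (hEne : E.Nonempty) (hEcl : IsClosed E)
    (p α : ℝ) (hp : 1 < p)
    (hdim : assouadDim E < (n:ℝ) + min α (α * (-(1/(p-1))))) :
    IsApWeight p (fun x : En n => Metric.infDist x E ^ α) := by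
  have hp1 : 0 < p - 1 := by linarith
  set β := α * (-(1/(p-1))) with hβdef
  have hm0 : min α β ≤ 0 := by
    rcases le_or_gt α 0 with h|h
    · exact min_le_of_left_le h
    · refine min_le_of_right_le ?_
      rw [hβdef]
      have : 0 < 1/(p-1) := by positivity
      nlinarith
  obtain ⟨lam, C, hlam0, hlamlt, hC, hcov⟩ := exists_lam hn E hdim
  have hlamn : lam < n := by linarith
  have hα : lam - (n:ℝ) < α := by have := min_le_left α β; linarith
  have hβ2 : lam - (n:ℝ) < β := by have := min_le_right α β; linarith
  obtain ⟨C1, hC1, hcov'⟩ := uniform_cover hn hlam0 hC hcov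
  obtain ⟨C2, hC2, hM⟩ := measure_near hn hEne hEcl hlam0 hC1 hcov'
  have hEnull : volume E = 0 := vol_E_zero hEne hlamn hC2 hM
  obtain ⟨C4a, hC4a, hA⟩ := avg_bound hn hEne hEcl
    (fun hneg => lint_neg_exp hEne hEcl hlam0 hC2 hM hneg hα)
  obtain ⟨C4b, hC4b, hB⟩ := avg_bound hn hEne hEcl (γ := β)
    (fun hneg => lint_neg_exp hEne hEcl hlam0 hC2 hM hneg hβ2)
  constructor
  · constructor
    · -- locally integrable
      intro x₀
      refine ⟨ball x₀ 1, ball_mem_nhds x₀ one_pos, ?_⟩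
      have hsub : ball x₀ 1 ⊆ {y : En n | ∀ i, (fun i => x₀ i - 1) i ≤ y i ∧
          y i ≤ (fun i => x₀ i - 1) i + 2} := by
        intro y hy i
        have h1 : dist (y i) (x₀ i) ≤ dist y x₀ := coord_dist_le y x₀ i
        have h2 : dist y x₀ < 1 := mem_ball.1 hy
        rw [Real.dist_eq] at h1
        have := abs_le.1 (h1.trans h2.le)
        constructor <;> simp <;> linarith [this.1, this.2]
      exact ((hA (WithLp.toLp 2 (fun i => x₀ i - 1)) 2 two_pos).1).mono_set hsub
    · -- a.e. positivity
      rw [ae_iff]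
      refine measure_mono_null ?_ hEnull
      intro x hx
      simp only [mem_setOf_eq, not_lt] at hx
      by_contra hxE
      have hpos : 0 < infDist x E := (hEcl.notMem_iff_infDist_pos hEne).1 hxE
      exact absurd (Real.rpow_pos_of_pos hpos α) (by linarith)
  · -- Ap bound
    refine ⟨C4a * C4b^(p-1), by positivity, ?_⟩
    rintro Q ⟨c, h, hh, rfl⟩
    set t := infDist c E + n*h with htdef
    have hnR : (1:ℝ) ≤ (n:ℝ) := by exact_mod_cast hn
    have ht : 0 < t := by
      have h0 : 0 ≤ infDist c E := infDist_nonneg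
      nlinarith
    obtain ⟨hInt1, hnn1, hb1⟩ := hA c h hh
    obtain ⟨hInt2, hnn2, hb2⟩ := hB c h hh
    have hrw : (fun x : En n => ((fun x : En n => infDist x E ^ α) x) ^ (-(1/(p-1))))
        = fun x : En n => infDist x E ^ β := by
      funext x
      rw [hβdef, Real.rpow_mul infDist_nonneg]
    rw [show (⨍ x in {y : En n | ∀ i, c i ≤ y i ∧ y i ≤ c i + h},
        ((fun x : En n => infDist x E ^ α) x) ^ (-(1/(p-1))))
      = ⨍ x in {y : En n | ∀ i, c i ≤ y i ∧ y i ≤ c i + h}, infDist x E ^ β from by rw [hrw]]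
    have hpow : (⨍ x in {y : En n | ∀ i, c i ≤ y i ∧ y i ≤ c i + h}, infDist x E ^ β) ^ (p-1)
        ≤ (C4b * t^β) ^ (p-1) := Real.rpow_le_rpow hnn2 hb2 (by linarith)
    have hrhs : (C4b*t^β)^(p-1) = C4b^(p-1) * t^(β*(p-1)) := by
      rw [Real.mul_rpow hC4b.le (Real.rpow_nonneg ht.le _), ← Real.rpow_mul ht.le]
    have hβp : β*(p-1) = -α := by
      rw [hβdef]
      field_simp
    calc (⨍ x in {y : En n | ∀ i, c i ≤ y i ∧ y i ≤ c i + h},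
            (fun x : En n => infDist x E ^ α) x)
          * (⨍ x in {y : En n | ∀ i, c i ≤ y i ∧ y i ≤ c i + h}, infDist x E ^ β) ^ (p-1)
        ≤ (C4a * t^α) * (C4b^(p-1) * t^(-α)) := by
          apply mul_le_mul hb1 ?_ (Real.rpow_nonneg hnn2 _) ?_
          · rw [← hβp, ← hrhs]; exact hpow
          · have : 0 ≤ t^α := Real.rpow_nonneg ht.le _
            positivity
      _ = C4a*C4b^(p-1) * (t^α*t^(-α)) := by ring
      _ = C4a*C4b^(p-1) := by
          rw [← Real.rpow_add ht, add_neg_cancel, Real.rpow_zero, mul_one]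


end S7Aux

/-- Proposition `t.a_infty`: for a nonempty closed set `E ⊆ ℝ^n` and `ε > 0`, the weight
`ω = dist(·,E)^{ε-n}` is an `A_p` weight (A) for all `1 < p < ∞` provided
`dim_A(E) < ε ≤ n`, and (B) for a given `1 < p < ∞` provided `ε > n` and
`dim_A(E) < n - (ε-n)/(p-1)`. -/
theorem statement7 (n : ℕ) (hn : 1 ≤ n) (E : Set (En n)) (hEne : E.Nonempty)
    (hEcl : IsClosed E) (ε : ℝ) (hε : 0 < ε) :
    ((assouadDim E < ε → ε ≤ n → ∀ p : ℝ, 1 < p →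
        IsApWeight p (fun x : En n => Metric.infDist x E ^ (ε - (n : ℝ)))) ∧
      (∀ p : ℝ, 1 < p → (n : ℝ) < ε → assouadDim E < (n : ℝ) - (ε - n) / (p - 1) →
        IsApWeight p (fun x : En n => Metric.infDist x E ^ (ε - (n : ℝ))))) := by
  constructor
  · intro hdim hεn p hp
    have hp1 : 0 < p - 1 := by linarith
    have hmin : min (ε - (n:ℝ)) ((ε - (n:ℝ)) * (-(1/(p-1)))) = ε - n := by
      apply min_eq_left
      have h1 : 0 < 1/(p-1) := by positivity
      nlinarith
    apply core hn hEne hEcl p _ hp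
    rw [hmin]
    linarith
  · intro p hp hεn hdim
    have hp1 : 0 < p - 1 := by linarith
    have hmin : min (ε - (n:ℝ)) ((ε - (n:ℝ)) * (-(1/(p-1)))) = (ε - (n:ℝ)) * (-(1/(p-1))) := by
      apply min_eq_right
      have h1 : 0 < 1/(p-1) := by positivity
      nlinarith
    apply core hn hEne hEcl p _ hp
    rw [hmin]
    have : (ε - (n:ℝ)) * (-(1/(p-1))) = -((ε-n)/(p-1)) := by ring
    rw [this]
    linarith
end
end

section
/- Let 0 < s < 1 and 1 ≤ p < ∞, and let ω be a weight in ℝ^n. Then the Sobolev capacity C_{s,p,ω} is an outer measure on ℝ^n: C_{s,p,ω}(∅) = 0, C_{s,p,ω}(E) ≤ C_{s,p,ω}(F) whenever E ⊆ F, and C_{s,p,ω}(∪_{i=1}^∞ E_i) ≤ Σ_{i=1}^∞ C_{s,p,ω}(E_i) for all sets E_i ⊂ ℝ^n. -/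
open MeasureTheory Metric Set Filter
open scoped ENNReal Topology

noncomputable section

-- Auxiliary lemmas

/-- Clamp a real number into `[0,1]`. -/
def clamp01 (t : ℝ) : ℝ := min (max t 0) 1

lemma clamp01_nonneg (t : ℝ) : 0 ≤ clamp01 t := le_min (le_max_right _ _) zero_le_one

lemma clamp01_le_one (t : ℝ) : clamp01 t ≤ 1 := min_le_right _ _

lemma clamp01_mem (t : ℝ) : clamp01 t ∈ Icc (0:ℝ) 1 := ⟨clamp01_nonneg t, clamp01_le_one t⟩

lemma abs_clamp01_le (t : ℝ) : |clamp01 t| ≤ |t| := by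
  rw [abs_of_nonneg (clamp01_nonneg t)]
  exact le_trans (min_le_left _ _) (max_le (le_abs_self t) (abs_nonneg t))

lemma clamp01_eq_one {t : ℝ} (h : 1 ≤ t) : clamp01 t = 1 := by
  rw [clamp01, max_eq_left (le_trans zero_le_one h), min_eq_right h]

lemma lipschitzWith_clamp01 : LipschitzWith 1 clamp01 :=
  (LipschitzWith.id.max_const 0).min_const 1

lemma abs_clamp01_sub_clamp01 (a b : ℝ) : |clamp01 a - clamp01 b| ≤ |a - b| := by
  have := lipschitzWith_clamp01.dist_le_mul a b
  simpa [Real.dist_eq] using this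

lemma measurable_clamp01 : Measurable clamp01 :=
  (measurable_id.max measurable_const).min measurable_const

lemma abs_ciSup_sub_ciSup {a b : ℕ → ℝ} (ha : ∀ i, a i ∈ Icc (0:ℝ) 1)
    (hb : ∀ i, b i ∈ Icc (0:ℝ) 1) :
    |(⨆ i, a i) - ⨆ i, b i| ≤ ⨆ i, |a i - b i| := by
  have hba : BddAbove (range a) := ⟨1, by rintro _ ⟨i, rfl⟩; exact (ha i).2⟩
  have hbb : BddAbove (range b) := ⟨1, by rintro _ ⟨i, rfl⟩; exact (hb i).2⟩
  have habs : BddAbove (range fun i => |a i - b i|) := by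
    refine ⟨2, ?_⟩
    rintro _ ⟨i, rfl⟩
    have h1 := (ha i).1; have h2 := (ha i).2; have h3 := (hb i).1; have h4 := (hb i).2
    exact abs_le.2 ⟨by linarith, by linarith⟩
  rw [abs_sub_le_iff]
  constructor
  · rw [sub_le_iff_le_add]
    refine ciSup_le fun i => ?_
    calc a i ≤ b i + |a i - b i| := by
          have := le_abs_self (a i - b i); linarith
      _ ≤ (⨆ i, |a i - b i|) + ⨆ i, b i := by
          have h1 := le_ciSup hbb i; have h2 := le_ciSup habs i; linarith
  · rw [sub_le_iff_le_add]
    refine ciSup_le fun i => ?_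
    calc b i ≤ a i + |a i - b i| := by
          have := neg_abs_le (a i - b i); linarith
      _ ≤ (⨆ i, |a i - b i|) + ⨆ i, a i := by
          have h1 := le_ciSup hba i; have h2 := le_ciSup habs i; linarith

lemma key_tsum {p : ℝ} (hp : 0 < p) {a b : ℕ → ℝ} (ha : ∀ i, a i ∈ Icc (0:ℝ) 1)
    (hb : ∀ i, b i ∈ Icc (0:ℝ) 1) (c : ℝ) :
    ENNReal.ofReal (|(⨆ i, a i) - ⨆ i, b i| ^ p * c) ≤
      ∑' i, ENNReal.ofReal (|a i - b i| ^ p * c) := by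
  rcases le_or_gt c 0 with hc | hc
  · rw [ENNReal.ofReal_of_nonpos
      (mul_nonpos_of_nonneg_of_nonpos (Real.rpow_nonneg (abs_nonneg _) _) hc)]
    exact zero_le
  have hmul : ∀ x : ℝ, ENNReal.ofReal (|x| ^ p * c)
      = ENNReal.ofReal (|x| ^ p) * ENNReal.ofReal c := fun x =>
    ENNReal.ofReal_mul (Real.rpow_nonneg (abs_nonneg _) _)
  simp only [hmul]
  rw [ENNReal.tsum_mul_right]
  refine mul_le_mul_left ?_ _
  -- main inequality without the constant
  have habs : BddAbove (range fun i => |a i - b i|) := by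
    refine ⟨2, ?_⟩
    rintro _ ⟨i, rfl⟩
    have h1 := (ha i).1; have h2 := (ha i).2; have h3 := (hb i).1; have h4 := (hb i).2
    exact abs_le.2 ⟨by linarith, by linarith⟩
  set S : ℝ := ⨆ i, |a i - b i| with hS
  have hS0 : 0 ≤ S := le_trans (abs_nonneg (a 0 - b 0)) (le_ciSup habs 0)
  have h1 : |(⨆ i, a i) - ⨆ i, b i| ^ p ≤ S ^ p :=
    Real.rpow_le_rpow (abs_nonneg _) (abs_ciSup_sub_ciSup ha hb) hp.le
  have h2 : S ^ p = ⨆ i, |a i - b i| ^ p := by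
    have hfm : Monotone (fun t : ℝ => max t 0 ^ p) := fun x y hxy =>
      Real.rpow_le_rpow (le_max_right _ _) (max_le_max hxy le_rfl) hp.le
    have hfc : ContinuousAt (fun t : ℝ => max t 0 ^ p) S :=
      ((Real.continuous_rpow_const hp.le).comp
        (continuous_id.max continuous_const)).continuousAt
    have := hfm.map_ciSup_of_continuousAt hfc habs
    simp only [← hS, max_eq_left hS0] at this
    rw [this]
    exact iSup_congr fun i => by rw [max_eq_left (abs_nonneg _)]
  set T : ℝ≥0∞ := ∑' i, ENNReal.ofReal (|a i - b i| ^ p) with hT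
  rcases eq_or_ne T ∞ with hTt | hTt
  · rw [hTt]; exact le_top
  refine ENNReal.ofReal_le_of_le_toReal ?_
  refine le_trans h1 ?_
  rw [h2]
  refine ciSup_le fun i => ?_
  calc |a i - b i| ^ p = (ENNReal.ofReal (|a i - b i| ^ p)).toReal :=
        (ENNReal.toReal_ofReal (Real.rpow_nonneg (abs_nonneg _) _)).symm
    _ ≤ T.toReal := ENNReal.toReal_mono hTt (ENNReal.le_tsum i)

lemma key_tsum_single {p : ℝ} (hp : 0 < p) {a : ℕ → ℝ} (ha : ∀ i, a i ∈ Icc (0:ℝ) 1) :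
    ENNReal.ofReal (|⨆ i, a i| ^ p) ≤ ∑' i, ENNReal.ofReal (|a i| ^ p) := by
  have := key_tsum hp ha (b := fun _ => (0:ℝ)) (fun i => ⟨le_rfl, zero_le_one⟩) 1
  simpa [ciSup_const] using this

lemma ofReal_mul_right_mono {a b c : ℝ} (ha : 0 ≤ a) (h : a ≤ b) :
    ENNReal.ofReal (a * c) ≤ ENNReal.ofReal (b * c) := by
  rcases le_or_gt 0 c with hc | hc
  · exact ENNReal.ofReal_le_ofReal (mul_le_mul_of_nonneg_right h hc)
  · rw [ENNReal.ofReal_of_nonpos (mul_nonpos_of_nonneg_of_nonpos ha hc.le)]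
    exact zero_le


/-- The `p`-th power of the fractional weighted Sobolev seminorm
`|f|_{W^{s,p,ω}(G)}^p = ∫_G ∫_G |f(x)-f(y)|^p / |x-y|^{sp} · ω(x-y) dy dx`,
as an extended nonnegative real. -/
def fracEnergy {n : ℕ} (s p : ℝ) (ω : En n → ℝ) (G : Set (En n)) (f : En n → ℝ) : ℝ≥0∞ :=
  ∫⁻ x in G, ∫⁻ y in G, ENNReal.ofReal (|f x - f y| ^ p / ‖x - y‖ ^ (s * p) * ω (x - y))

/-- Membership in the fractional weighted Sobolev space `W^{s,p,ω}(G)`: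
`f ∈ L^p(G)` and the seminorm `|f|_{W^{s,p,ω}(G)}` is finite. -/
def MemW {n : ℕ} (s p : ℝ) (ω : En n → ℝ) (G : Set (En n)) (f : En n → ℝ) : Prop :=
  MemLp f (ENNReal.ofReal p) (volume.restrict G) ∧ fracEnergy s p ω G f < ⊤

/-- The `p`-th power of the norm `‖f‖_{W^{s,p,ω}(ℝ^n)}^p = ‖f‖_{L^p}^p + |f|_{W^{s,p,ω}}^p`. -/
def WnormP {n : ℕ} (s p : ℝ) (ω : En n → ℝ) (f : En n → ℝ) : ℝ≥0∞ :=
  eLpNorm f (ENNReal.ofReal p) volume ^ p + fracEnergy s p ω univ f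

/-- The Sobolev capacity
`C_{s,p,ω}(E) = inf { ‖φ‖_{W^{s,p,ω}(ℝ^n)}^p : φ ∈ W^{s,p,ω}(ℝ^n), φ ≥ 1 on an open
neighbourhood of E }` (with value `∞` if no admissible function exists). -/
def sobCap {n : ℕ} (s p : ℝ) (ω : En n → ℝ) (E : Set (En n)) : ℝ≥0∞ :=
  ⨅ (φ : En n → ℝ) (_ : MemW s p ω univ φ ∧
      ∃ U : Set (En n), IsOpen U ∧ E ⊆ U ∧ ∀ x ∈ U, 1 ≤ φ x),
    WnormP s p ω φ

/-- Lemma `l.outer_measure`: the Sobolev capacity `C_{s,p,ω}` is an outer measure: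
it vanishes on the empty set, is monotone, and is countably subadditive. -/
theorem statement13 (n : ℕ) (hn : 1 ≤ n) (s p : ℝ) (hs0 : 0 < s) (hs1 : s < 1)
    (hp : 1 ≤ p) (ω : En n → ℝ) (hω : IsWeight ω) :
    sobCap s p ω (∅ : Set (En n)) = 0 ∧
    (∀ E F : Set (En n), E ⊆ F → sobCap s p ω E ≤ sobCap s p ω F) ∧
    (∀ E : ℕ → Set (En n), sobCap s p ω (⋃ i, E i) ≤ ∑' i, sobCap s p ω (E i)) := by
  have hp0 : (0:ℝ) < p := lt_of_lt_of_le one_pos hp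
  have hq0 : (ENNReal.ofReal p) ≠ 0 := by
    simp only [ne_eq, ENNReal.ofReal_eq_zero, not_le]; exact hp0
  have hqt : (ENNReal.ofReal p) ≠ ∞ := ENNReal.ofReal_ne_top
  -- the Lp part of the norm as a plain lintegral
  have hLp : ∀ f : En n → ℝ, eLpNorm f (ENNReal.ofReal p) volume ^ p
      = ∫⁻ x, ENNReal.ofReal (|f x| ^ p) := by
    intro f
    rw [eLpNorm_eq_lintegral_rpow_enorm_toReal hq0 hqt, ENNReal.toReal_ofReal hp0.le,
      ← ENNReal.rpow_mul, one_div_mul_cancel hp0.ne', ENNReal.rpow_one]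
    refine lintegral_congr fun x => ?_
    rw [Real.enorm_eq_ofReal_abs, ENNReal.ofReal_rpow_of_nonneg (abs_nonneg _) hp0.le]
  -- the fractional energy with the integrand in product form
  have hFE : ∀ f : En n → ℝ, fracEnergy s p ω univ f
      = ∫⁻ x, ∫⁻ y, ENNReal.ofReal (|f x - f y| ^ p * (ω (x - y) / ‖x - y‖ ^ (s * p))) := by
    intro f
    rw [fracEnergy]
    simp only [Measure.restrict_univ]
    exact lintegral_congr fun x => lintegral_congr fun y => by
      rw [div_mul_eq_mul_div, mul_div_assoc]
  refine ⟨?_, ?_, ?_⟩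
  · -- empty set
    refine le_antisymm ?_ zero_le
    have hE0 : fracEnergy s p ω univ (fun _ : En n => (0:ℝ)) = 0 := by
      simp [fracEnergy, Real.zero_rpow hp0.ne']
    have hW0 : WnormP s p ω (fun _ : En n => (0:ℝ)) = 0 := by
      rw [WnormP, hE0, add_zero, eLpNorm_zero', ENNReal.zero_rpow_of_pos hp0]
    refine le_trans (iInf₂_le (fun _ : En n => (0:ℝ)) ?_) (le_of_eq hW0)
    refine ⟨⟨MemLp.zero', by rw [hE0]; exact ENNReal.zero_lt_top⟩,
      ∅, isOpen_empty, subset_rfl, fun x hx => absurd hx (notMem_empty x)⟩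
  · -- monotonicity
    intro E F hEF
    refine le_iInf fun φ => le_iInf fun hφ => ?_
    exact iInf₂_le φ ⟨hφ.1, hφ.2.imp fun U hU => ⟨hU.1, hEF.trans hU.2.1, hU.2.2⟩⟩
  · -- countable subadditivity
    intro E
    rcases eq_or_ne (∑' i, sobCap s p ω (E i)) ∞ with hTt | hTt
    · rw [hTt]; exact le_top
    refine ENNReal.le_of_forall_pos_le_add fun ε hε _ => ?_
    obtain ⟨ε', hε'pos, hε'sum⟩ :=
      ENNReal.exists_pos_sum_of_countable' (ENNReal.coe_ne_zero.2 hε.ne') ℕ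
    have hcap : ∀ i, sobCap s p ω (E i) ≠ ∞ :=
      fun i => ne_top_of_le_ne_top hTt (ENNReal.le_tsum i)
    have H : ∀ i, ∃ φ : En n → ℝ,
        (MemW s p ω univ φ ∧ ∃ U, IsOpen U ∧ E i ⊆ U ∧ ∀ x ∈ U, 1 ≤ φ x) ∧
          WnormP s p ω φ ≤ sobCap s p ω (E i) + ε' i := by
      intro i
      have hlt : sobCap s p ω (E i) < sobCap s p ω (E i) + ε' i :=
        ENNReal.lt_add_right (hcap i) (hε'pos i).ne'
      conv_lhs at hlt => rw [sobCap]
      rw [iInf_lt_iff] at hlt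
      obtain ⟨φ, hφ⟩ := hlt
      rw [iInf_lt_iff] at hφ
      obtain ⟨hadm, hval⟩ := hφ
      exact ⟨φ, hadm, hval.le⟩
    choose φ hadm hval using H
    have hmem : ∀ i, MemW s p ω univ (φ i) := fun i => (hadm i).1
    choose U hUo hEU hU1 using fun i => (hadm i).2
    -- measurable representatives
    have hφm : ∀ i, AEMeasurable (φ i) volume := by
      intro i
      have := (hmem i).1.aestronglyMeasurable
      rw [Measure.restrict_univ] at this
      exact this.aemeasurable
    have hgm : ∀ i, Measurable ((hφm i).mk (φ i)) := fun i => (hφm i).measurable_mk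
    have hφg : ∀ i, φ i =ᵐ[volume] (hφm i).mk (φ i) := fun i => (hφm i).ae_eq_mk
    have hωm : AEMeasurable ω volume := hω.1.aestronglyMeasurable.aemeasurable
    have hwm : Measurable (hωm.mk ω) := hωm.measurable_mk
    have hωw : ω =ᵐ[volume] hωm.mk ω := hωm.ae_eq_mk
    set w : En n → ℝ := hωm.mk ω with hwdef
    set ψ : ℕ → En n → ℝ := fun i x => clamp01 (φ i x) with hψdef
    set η : ℕ → En n → ℝ := fun i x => clamp01 ((hφm i).mk (φ i) x) with hηdef
    have hηm : ∀ i, Measurable (η i) := fun i => measurable_clamp01.comp (hgm i)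
    have hψη : ∀ i, ψ i =ᵐ[volume] η i := fun i =>
      (hφg i).mono fun x hx => by simp only [hψdef, hηdef, hx]
    set Φ : En n → ℝ := fun x => ⨆ i, ψ i x with hΦdef
    have hbdd : ∀ x, BddAbove (range fun i => ψ i x) :=
      fun x => ⟨1, by rintro _ ⟨i, rfl⟩; exact clamp01_le_one _⟩
    have hΦ0 : ∀ x, 0 ≤ Φ x :=
      fun x => le_trans (clamp01_nonneg (φ 0 x)) (le_ciSup (hbdd x) 0)
    have hΦ1 : ∀ x, Φ x ≤ 1 := fun x => ciSup_le fun i => clamp01_le_one _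
    -- a.e. measurability of Φ
    have hΦae : Φ =ᵐ[volume] fun x => ⨆ i, η i x := by
      filter_upwards [ae_all_iff.2 hψη] with x hx
      exact iSup_congr hx
    have hΦm : AEMeasurable Φ volume :=
      (Measurable.iSup fun i => hηm i).aemeasurable.congr hΦae.symm
    -- a.e. equality of weights along translations
    have hsubae : ∀ x : En n, (fun y => ω (x - y)) =ᵐ[volume] fun y => w (x - y) :=
      fun x => (Measure.measurePreserving_sub_left volume x).quasiMeasurePreserving.ae_eq_comp hωw
    -- measurability facts for swapping sums and integrals
    have hcont_p : Continuous fun t : ℝ => |t| ^ p :=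
      (Real.continuous_rpow_const hp0.le).comp continuous_abs
    have hGm : ∀ i, Measurable (fun z : En n × En n =>
        ENNReal.ofReal (|η i z.1 - η i z.2| ^ p * (w (z.1 - z.2) / ‖z.1 - z.2‖ ^ (s * p)))) := by
      intro i
      refine Measurable.ennreal_ofReal (Measurable.mul ?_ (Measurable.div ?_ ?_))
      · exact hcont_p.measurable.comp (((hηm i).comp measurable_fst).sub ((hηm i).comp measurable_snd))
      · exact hwm.comp (measurable_fst.sub measurable_snd)
      · exact ((Real.continuous_rpow_const (by positivity : (0:ℝ) ≤ s * p)).comp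
          (continuous_fst.sub continuous_snd).norm).measurable
    have hFaem : ∀ i (x : En n), AEMeasurable (fun y =>
        ENNReal.ofReal (|ψ i x - ψ i y| ^ p * (ω (x - y) / ‖x - y‖ ^ (s * p)))) volume := by
      intro i x
      have hmeas : Measurable (fun y =>
          ENNReal.ofReal (|ψ i x - η i y| ^ p * (w (x - y) / ‖x - y‖ ^ (s * p)))) := by
        refine Measurable.ennreal_ofReal (Measurable.mul ?_ (Measurable.div ?_ ?_))
        · exact hcont_p.measurable.comp (measurable_const.sub (hηm i))
        · exact hwm.comp (measurable_const.sub measurable_id)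
        · exact ((Real.continuous_rpow_const (by positivity : (0:ℝ) ≤ s * p)).comp
            (continuous_const.sub continuous_id).norm).measurable
      refine hmeas.aemeasurable.congr ?_
      filter_upwards [hψη i, hsubae x] with y h1 h2
      rw [h1, h2]
    have hFout : ∀ i, AEMeasurable (fun x => ∫⁻ y,
        ENNReal.ofReal (|ψ i x - ψ i y| ^ p * (ω (x - y) / ‖x - y‖ ^ (s * p)))) volume := by
      intro i
      refine ((Measurable.lintegral_prod_right' (ν := volume) (hGm i)).aemeasurable).congr ?_
      filter_upwards [hψη i] with x hx
      refine lintegral_congr_ae ?_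
      filter_upwards [hψη i, hsubae x] with y h1 h2
      rw [hx, h1, h2]
    -- energy of Φ
    have hEnergyψ : ∀ i, fracEnergy s p ω univ (ψ i) ≤ fracEnergy s p ω univ (φ i) := by
      intro i
      rw [hFE (ψ i), hFE (φ i)]
      refine lintegral_mono fun x => lintegral_mono fun y => ?_
      refine ofReal_mul_right_mono (Real.rpow_nonneg (abs_nonneg _) _) ?_
      exact Real.rpow_le_rpow (abs_nonneg _) (abs_clamp01_sub_clamp01 _ _) hp0.le
    have hEnergyΦ : fracEnergy s p ω univ Φ ≤ ∑' i, fracEnergy s p ω univ (ψ i) := by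
      simp only [hFE]
      calc ∫⁻ x, ∫⁻ y, ENNReal.ofReal (|Φ x - Φ y| ^ p * (ω (x - y) / ‖x - y‖ ^ (s * p)))
          ≤ ∫⁻ x, ∫⁻ y, ∑' i, ENNReal.ofReal
              (|ψ i x - ψ i y| ^ p * (ω (x - y) / ‖x - y‖ ^ (s * p))) := by
            refine lintegral_mono fun x => lintegral_mono fun y => ?_
            exact key_tsum hp0 (fun i => clamp01_mem _) (fun i => clamp01_mem _) _
        _ = ∫⁻ x, ∑' i, ∫⁻ y, ENNReal.ofReal
              (|ψ i x - ψ i y| ^ p * (ω (x - y) / ‖x - y‖ ^ (s * p))) :=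
            lintegral_congr fun x => lintegral_tsum fun i => hFaem i x
        _ = ∑' i, ∫⁻ x, ∫⁻ y, ENNReal.ofReal
              (|ψ i x - ψ i y| ^ p * (ω (x - y) / ‖x - y‖ ^ (s * p))) :=
            lintegral_tsum fun i => hFout i
    -- Lp part of Φ
    have hLψm : ∀ i, AEMeasurable (fun x => ENNReal.ofReal (|ψ i x| ^ p)) volume := by
      intro i
      refine ((hcont_p.measurable.comp (hηm i)).ennreal_ofReal).aemeasurable.congr ?_
      filter_upwards [hψη i] with x hx
      simp only [Function.comp_apply, hx]
    have hLpΦ : eLpNorm Φ (ENNReal.ofReal p) volume ^ p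
        ≤ ∑' i, eLpNorm (ψ i) (ENNReal.ofReal p) volume ^ p := by
      simp only [hLp]
      calc (∫⁻ x, ENNReal.ofReal (|Φ x| ^ p))
          ≤ ∫⁻ x, ∑' i, ENNReal.ofReal (|ψ i x| ^ p) :=
            lintegral_mono fun x => key_tsum_single hp0 fun i => clamp01_mem _
        _ = ∑' i, ∫⁻ x, ENNReal.ofReal (|ψ i x| ^ p) := lintegral_tsum hLψm
    have hLψle : ∀ i, eLpNorm (ψ i) (ENNReal.ofReal p) volume ^ p
        ≤ eLpNorm (φ i) (ENNReal.ofReal p) volume ^ p := by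
      intro i
      refine ENNReal.rpow_le_rpow ?_ hp0.le
      refine eLpNorm_mono fun x => ?_
      simpa [Real.norm_eq_abs] using abs_clamp01_le (φ i x)
    -- comparing W-norms
    have hψle : ∀ i, WnormP s p ω (ψ i) ≤ WnormP s p ω (φ i) :=
      fun i => add_le_add (hLψle i) (hEnergyψ i)
    have hWΦ : WnormP s p ω Φ ≤ ∑' i, WnormP s p ω (φ i) := by
      calc WnormP s p ω Φ
          ≤ (∑' i, eLpNorm (ψ i) (ENNReal.ofReal p) volume ^ p)
            + ∑' i, fracEnergy s p ω univ (ψ i) := add_le_add hLpΦ hEnergyΦ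
        _ = ∑' i, WnormP s p ω (ψ i) := (ENNReal.tsum_add).symm
        _ ≤ ∑' i, WnormP s p ω (φ i) := ENNReal.tsum_le_tsum hψle
    have hsum_le : ∑' i, WnormP s p ω (φ i)
        ≤ (∑' i, sobCap s p ω (E i)) + ∑' i, ε' i := by
      calc ∑' i, WnormP s p ω (φ i) ≤ ∑' i, (sobCap s p ω (E i) + ε' i) :=
            ENNReal.tsum_le_tsum hval
        _ = (∑' i, sobCap s p ω (E i)) + ∑' i, ε' i := ENNReal.tsum_add
    have hWfin : WnormP s p ω Φ ≠ ∞ := by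
      refine ne_top_of_le_ne_top ?_ (hWΦ.trans hsum_le)
      exact ENNReal.add_ne_top.2 ⟨hTt, (hε'sum.trans_le le_top).ne⟩
    -- admissibility of Φ
    have hΦadm : MemW s p ω univ Φ ∧ ∃ U' : Set (En n), IsOpen U' ∧ (⋃ i, E i) ⊆ U'
        ∧ ∀ x ∈ U', 1 ≤ Φ x := by
      have hWsplit : eLpNorm Φ (ENNReal.ofReal p) volume ^ p ≠ ∞ ∧
          fracEnergy s p ω univ Φ ≠ ∞ := by
        rw [← ENNReal.add_ne_top]; exact hWfin
      refine ⟨⟨⟨?_, ?_⟩, lt_top_iff_ne_top.2 hWsplit.2⟩, ⋃ i, U i, isOpen_iUnion hUo,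
        iUnion_mono hEU, ?_⟩
      · rw [Measure.restrict_univ]; exact hΦm.aestronglyMeasurable
      · rw [Measure.restrict_univ]
        by_contra hcon
        rw [not_lt, top_le_iff] at hcon
        rw [hcon, ENNReal.top_rpow_of_pos hp0] at hWsplit
        exact hWsplit.1 rfl
      · intro x hx
        obtain ⟨j, hj⟩ := mem_iUnion.1 hx
        have : ψ j x = 1 := clamp01_eq_one (hU1 j x hj)
        calc (1:ℝ) = ψ j x := this.symm
          _ ≤ Φ x := le_ciSup (hbdd x) j
    calc sobCap s p ω (⋃ i, E i) ≤ WnormP s p ω Φ := iInf₂_le Φ hΦadm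
      _ ≤ (∑' i, sobCap s p ω (E i)) + ∑' i, ε' i := hWΦ.trans hsum_le
      _ ≤ (∑' i, sobCap s p ω (E i)) + ε := add_le_add_right hε'sum.le _
end
end
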